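/- arXiv:1501.07402 — 2 statements merged into one kernel-verified Lean document; each statement's English description precedes it below -/
import Mathlib

section
/- With R_max = (d, s_max) and s_max = (I−M^s)^{-1}(a + M^d d − d)^+, one has Φ(R_max) ≤ R_max componentwise; in particular (a + M^d d + M^s s_max − d)^+ ≤ s_max. -/
/-!
Writing `v = (a + M^d d − d)⁺ ≥ 0`, the vector `s_max = (I − M^s)⁻¹ v` solves `s = v + M^s s`,
so the claim reduces to `s_max ≥ 0`. No Neumann series is needed for that: if `(I − M)x ≥ 0`
and `J = {i | x i < 0}` were nonempty, summing `x = (I − M)x + Mx` over `J` and using that the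
column sums of `M` are at most `1` forces every column sum of `M` over `J` to equal `1`,
which the Elsinger property forbids. Applied to `±x` the same argument makes `I − M` injective,
hence invertible.
-/

open Matrix Finset Filter Topology

/-- A left substochastic matrix: nonnegative entries, column sums at most 1. -/
def Substoch {n : ℕ} (M : Matrix (Fin n) (Fin n) ℝ) : Prop :=
  (∀ i j, 0 ≤ M i j) ∧ ∀ j, ∑ i, M i j ≤ 1

/-- The Elsinger Property: no nonempty subset `J` of indices with all column
sums over `J` (for columns in `J`) equal to 1. -/
def Elsinger {n : ℕ} (M : Matrix (Fin n) (Fin n) ℝ) : Prop :=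
  ∀ J : Finset (Fin n), J.Nonempty → ¬ (∀ j ∈ J, ∑ i ∈ J, M i j = 1)

/-- The liquidation value map `Φ(r,s) = (min{d, a+M^d r+M^s s}, (a+M^d r+M^s s−d)⁺)`. -/
noncomputable def Phi {n : ℕ} (a d : Fin n → ℝ) (Md Ms : Matrix (Fin n) (Fin n) ℝ)
    (R : (Fin n → ℝ) × (Fin n → ℝ)) : (Fin n → ℝ) × (Fin n → ℝ) :=
  (fun i => min (d i) (a i + Md.mulVec R.1 i + Ms.mulVec R.2 i),
   fun i => max (a i + Md.mulVec R.1 i + Ms.mulVec R.2 i - d i) 0)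

/-- The lower bound `R_min = (min{d,a}, (a−d)⁺)`. -/
noncomputable def Rmin {n : ℕ} (a d : Fin n → ℝ) : (Fin n → ℝ) × (Fin n → ℝ) :=
  (fun i => min (d i) (a i), fun i => max (a i - d i) 0)

/-- The upper bound `R_max = (d, (I−M^s)⁻¹ (a + M^d d − d)⁺)`. -/
noncomputable def Rmax {n : ℕ} (a d : Fin n → ℝ)
    (Md Ms : Matrix (Fin n) (Fin n) ℝ) : (Fin n → ℝ) × (Fin n → ℝ) :=
  (d, (1 - Ms)⁻¹.mulVec fun i => max (a i + Md.mulVec d i - d i) 0)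

namespace Substoch

variable {n : ℕ} {M : Matrix (Fin n) (Fin n) ℝ}

theorem sum_le_one (hM : Substoch M) (J : Finset (Fin n)) (j : Fin n) :
    ∑ i ∈ J, M i j ≤ 1 :=
  (sum_le_sum_of_subset_of_nonneg (subset_univ J) fun i _ _ => hM.1 i j).trans (hM.2 j)

theorem nonneg_of_one_sub_mulVec_nonneg (hM : Substoch M) (hE : Elsinger M)
    {x : Fin n → ℝ} (hx : 0 ≤ (1 - M) *ᵥ x) : 0 ≤ x := by
  classical
  by_contra hneg
  set J := univ.filter fun i => x i < 0
  have hJ : J.Nonempty := by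
    obtain ⟨i, hi⟩ : ∃ i, x i < 0 := by simpa [Pi.le_def] using hneg
    exact ⟨i, by simpa [J] using hi⟩
  have hmemJ : ∀ j, j ∈ J ↔ x j < 0 := by simp [J]
  have hsplit : ∀ i, x i = ((1 - M) *ᵥ x) i + ∑ j, M i j * x j := by
    intro i
    rw [sub_mulVec, one_mulVec, Pi.sub_apply]
    simp only [mulVec, dotProduct]
    ring
  have hsum_ge : ∑ j ∈ J, (∑ i ∈ J, M i j) * x j ≤ ∑ j ∈ J, x j :=
    calc ∑ j ∈ J, (∑ i ∈ J, M i j) * x j = ∑ i ∈ J, ∑ j ∈ J, M i j * x j := by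
          simp only [sum_mul]
          exact sum_comm
      _ ≤ ∑ i ∈ J, ∑ j, M i j * x j := by
          refine sum_le_sum fun i _ => sum_le_sum_of_subset_of_nonneg (subset_univ J) ?_
          intro j _ hj
          exact mul_nonneg (hM.1 i j) (not_lt.mp ((hmemJ j).not.mp hj))
      _ ≤ ∑ i ∈ J, x i := sum_le_sum fun i _ => by
          linarith [hsplit i, show 0 ≤ ((1 - M) *ᵥ x) i from hx i]
  have hterm_nonpos : ∀ j ∈ J, (1 - ∑ i ∈ J, M i j) * x j ≤ 0 := fun j hj =>
    mul_nonpos_of_nonneg_of_nonpos (by linarith [hM.sum_le_one J j]) ((hmemJ j).mp hj).le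
  have hterm_zero : ∀ j ∈ J, (1 - ∑ i ∈ J, M i j) * x j = 0 := by
    refine (sum_eq_zero_iff_of_nonpos hterm_nonpos).mp (le_antisymm (sum_nonpos hterm_nonpos) ?_)
    simp only [sub_mul, one_mul, sum_sub_distrib]
    linarith
  refine hE J hJ fun j hj => ?_
  have := (mul_eq_zero.mp (hterm_zero j hj)).resolve_right ((hmemJ j).mp hj).ne
  linarith

theorem isUnit_one_sub (hM : Substoch M) (hE : Elsinger M) : IsUnit (1 - M) := by
  refine mulVec_injective_iff_isUnit.mp fun x y hxy => ?_
  have hzero : (1 - M) *ᵥ (x - y) = 0 := by rw [mulVec_sub, hxy, sub_self]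
  have hle := hM.nonneg_of_one_sub_mulVec_nonneg hE (x := x - y) hzero.ge
  have hge := hM.nonneg_of_one_sub_mulVec_nonneg hE (x := y - x)
    (by rw [← neg_sub x y, mulVec_neg, hzero, neg_zero])
  exact le_antisymm (sub_nonneg.mp hge) (sub_nonneg.mp hle)

theorem one_sub_mulVec_inv_mulVec (hM : Substoch M) (hE : Elsinger M) (v : Fin n → ℝ) :
    (1 - M) *ᵥ ((1 - M)⁻¹ *ᵥ v) = v := by
  rw [mulVec_mulVec, mul_nonsing_inv _ ((isUnit_iff_isUnit_det _).mp (hM.isUnit_one_sub hE)),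
    one_mulVec]

theorem inv_one_sub_mulVec_nonneg (hM : Substoch M) (hE : Elsinger M) {v : Fin n → ℝ}
    (hv : 0 ≤ v) : 0 ≤ (1 - M)⁻¹ *ᵥ v :=
  hM.nonneg_of_one_sub_mulVec_nonneg hE (by rwa [hM.one_sub_mulVec_inv_mulVec hE])

end Substoch

theorem Phi_Rmax_le_Rmax_general {n : ℕ} (a d : Fin n → ℝ)
    (Md Ms : Matrix (Fin n) (Fin n) ℝ)
    (hMs : Substoch Ms) (hMsE : Elsinger Ms) :
    Phi a d Md Ms (Rmax a d Md Ms) ≤ Rmax a d Md Ms ∧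
    (∀ i, max (a i + Md.mulVec d i + Ms.mulVec (Rmax a d Md Ms).2 i - d i) 0
        ≤ (Rmax a d Md Ms).2 i) := by
  set v : Fin n → ℝ := fun i => max (a i + Md.mulVec d i - d i) 0
  have hs_fixed : ∀ i, (Rmax a d Md Ms).2 i = v i + Ms.mulVec (Rmax a d Md Ms).2 i := by
    intro i
    have := congrFun (hMs.one_sub_mulVec_inv_mulVec hMsE v) i
    simp only [sub_mulVec, one_mulVec, Pi.sub_apply] at this
    simp only [Rmax]
    linarith
  have hs_nonneg : 0 ≤ (Rmax a d Md Ms).2 :=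
    hMs.inv_one_sub_mulVec_nonneg hMsE fun i => le_max_right _ _
  have hbound : ∀ i, max (a i + Md.mulVec d i + Ms.mulVec (Rmax a d Md Ms).2 i - d i) 0
      ≤ (Rmax a d Md Ms).2 i := fun i =>
    max_le (by linarith [le_max_left (a i + Md.mulVec d i - d i) 0, hs_fixed i]) (hs_nonneg i)
  exact ⟨⟨fun i => min_le_left _ _, hbound⟩, hbound⟩

/-- `Φ(R_max) ≤ R_max` componentwise; in particular
`(a + M^d d + M^s s_max − d)⁺ ≤ s_max` with `s_max = (I−M^s)⁻¹(a + M^d d − d)⁺`. -/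
theorem Phi_Rmax_le_Rmax {n : ℕ} (a d : Fin n → ℝ)
    (ha : ∀ i, 0 ≤ a i) (hd : ∀ i, 0 ≤ d i)
    (Md Ms : Matrix (Fin n) (Fin n) ℝ)
    (hMd : Substoch Md) (hMs : Substoch Ms) (hMsE : Elsinger Ms) :
    Phi a d Md Ms (Rmax a d Md Ms) ≤ Rmax a d Md Ms ∧
    (∀ i, max (a i + Md.mulVec d i + Ms.mulVec (Rmax a d Md Ms).2 i - d i) 0
        ≤ (Rmax a d Md Ms).2 i) :=
  Phi_Rmax_le_Rmax_general a d Md Ms hMs hMsE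
end

section
/- In the iteration w^{k+1} = (I − M^s G(w^k))^{-1} w^0, if at some step l the sign-pattern sets P(w^l) = {i : w^l_i ≥ 0} and P(w^{l+1}) coincide, then all subsequent iterates equal w^{l+1}, and (w^{l+1})^+ is a fixed point of s ↦ (a + M^d r̄ + M^s s − d)^+. -/
open Matrix Finset Filter Topology

/-- `G(w) = diag(w ≥ 0)`: the 0-1 diagonal matrix indicating nonnegative entries. -/
noncomputable def Gmat {n : ℕ} (w : Fin n → ℝ) : Matrix (Fin n) (Fin n) ℝ :=
  Matrix.diagonal fun i => if 0 ≤ w i then 1 else 0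

/-!
Because `Mˢ` is substochastic with the Elsinger property, `I - Mˢ G` is invertible for every
0-1 diagonal `G`: a kernel vector `v` would give `|v| ≤ Mˢ G |v|`, and summing forces the
support `J` of `v` to be a set whose columns restricted to `J` sum to one. The iteration
`w ↦ (I - Mˢ G(w))⁻¹ w⁰` depends on `w` only through its sign pattern, so once the pattern
repeats the iterate is a fixed point; multiplying out `(I - Mˢ G(w)) w = w⁰` with
`G(w) w = w⁺` gives the fixed-point equation of the equity map.
-/

open Function

lemma sum_mulVec_eq_sum_colSum_mul {ι R : Type*} [Fintype ι] [CommSemiring R]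
    (M : Matrix ι ι R) (y : ι → R) : ∑ i, (M *ᵥ y) i = ∑ j, (∑ i, M i j) * y j := by
  simp only [mulVec, dotProduct, sum_mul]
  exact sum_comm

lemma eq_of_le_of_isFixedPt {α : Type*} {f : α → α} {w : ℕ → α}
    (hw : ∀ k, w (k + 1) = f (w k)) {m : ℕ} (hm : IsFixedPt f (w m)) :
    ∀ k, m ≤ k → w k = w m := by
  intro k hk
  induction k, hk using Nat.le_induction with
  | base => rfl
  | succ k _ ih => rw [hw, ih, hm]

section OrderedRing

variable {ι R : Type*} [Fintype ι] [CommRing R] [LinearOrder R] [IsStrictOrderedRing R]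

lemma abs_mulVec_le_mulVec_abs {M : Matrix ι ι R} (hM : ∀ i j, 0 ≤ M i j) (v : ι → R) :
    |M *ᵥ v| ≤ M *ᵥ |v| := fun i =>
  (abs_sum_le_sum_abs _ _).trans_eq <|
    sum_congr rfl fun j _ => by rw [abs_mul, abs_of_nonneg (hM i j), Pi.abs_apply]

lemma entry_eq_zero_of_mulVec_eq_self {M : Matrix ι ι R} (hM : ∀ i j, 0 ≤ M i j)
    {y : ι → R} (hy : 0 ≤ y) (hMy : M *ᵥ y = y) {i j : ι} (hi : y i = 0) (hj : y j ≠ 0) :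
    M i j = 0 := by
  have hrow : ∑ k, M i k * y k = 0 := (congrFun hMy i).trans hi
  have := (sum_eq_zero_iff_of_nonneg fun k _ => mul_nonneg (hM i k) (hy k)).1 hrow j (mem_univ j)
  exact (mul_eq_zero.1 this).resolve_right hj

end OrderedRing

namespace Substoch

variable {n : ℕ} {M : Matrix (Fin n) (Fin n) ℝ} {y : Fin n → ℝ}

lemma sum_mulVec_le (hM : Substoch M) (hy : 0 ≤ y) : ∑ i, (M *ᵥ y) i ≤ ∑ i, y i := by
  rw [sum_mulVec_eq_sum_colSum_mul]
  exact sum_le_sum fun j _ => mul_le_of_le_one_left (hy j) (hM.2 j)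

lemma mulVec_eq_of_le_mulVec (hM : Substoch M) (hy0 : 0 ≤ y) (hy : y ≤ M *ᵥ y) :
    M *ᵥ y = y := by
  have hsum := le_antisymm (sum_le_sum fun i _ => hy i) (hM.sum_mulVec_le hy0)
  funext i
  exact ((sum_eq_sum_iff_of_le fun i _ => hy i).1 hsum i (mem_univ i)).symm

lemma colSum_eq_one_of_le_mulVec (hM : Substoch M) (hy0 : 0 ≤ y) (hy : y ≤ M *ᵥ y) {j : Fin n}
    (hj : y j ≠ 0) : ∑ i, M i j = 1 := by
  have hsum : ∑ j, (∑ i, M i j) * y j = ∑ j, y j := by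
    rw [← sum_mulVec_eq_sum_colSum_mul]
    exact le_antisymm (hM.sum_mulVec_le hy0) (sum_le_sum fun i _ => hy i)
  have hj' := (sum_eq_sum_iff_of_le fun j _ => mul_le_of_le_one_left (hy0 j) (hM.2 j)).1
    hsum j (mem_univ j)
  exact mul_right_cancel₀ hj (hj'.trans (one_mul _).symm)

lemma eq_zero_of_le_mulVec (hM : Substoch M) (hE : Elsinger M) (hy0 : 0 ≤ y)
    (hy : y ≤ M *ᵥ y) : y = 0 := by
  by_contra hne
  set J := univ.filter fun j => y j ≠ 0
  obtain ⟨j₀, hj₀⟩ := ne_iff.1 hne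
  refine hE J ⟨j₀, by simpa [J] using hj₀⟩ fun j hj => ?_
  have hj' : y j ≠ 0 := (mem_filter.1 hj).2
  rw [← hM.colSum_eq_one_of_le_mulVec hy0 hy hj']
  refine sum_subset (subset_univ J) fun i _ hi => ?_
  exact entry_eq_zero_of_mulVec_eq_self hM.1 hy0 (hM.mulVec_eq_of_le_mulVec hy0 hy)
    (by simpa [J] using hi) hj'

lemma isUnit_det_one_sub (hM : Substoch M) (hE : Elsinger M) : IsUnit (1 - M).det := by
  rw [isUnit_iff_ne_zero, Ne, ← exists_mulVec_eq_zero_iff]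
  rintro ⟨v, hv, hker⟩
  have hfix : M *ᵥ v = v := by
    rw [sub_mulVec, one_mulVec, sub_eq_zero] at hker
    exact hker.symm
  have habs : |v| ≤ M *ᵥ |v| := by
    have h := abs_mulVec_le_mulVec_abs hM.1 v
    rwa [hfix] at h
  have hzero := hM.eq_zero_of_le_mulVec hE (fun i => abs_nonneg (v i)) habs
  exact hv (funext fun i => abs_eq_zero.1 (congrFun hzero i))

lemma mul_diagonal (hM : Substoch M) {g : Fin n → ℝ} (hg0 : 0 ≤ g) (hg1 : g ≤ 1) :
    Substoch (M * diagonal g) := by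
  refine ⟨fun i j => ?_, fun j => ?_⟩
  · rw [Matrix.mul_diagonal]
    exact mul_nonneg (hM.1 i j) (hg0 j)
  · simp only [Matrix.mul_diagonal, ← sum_mul]
    exact mul_le_one₀ (hM.2 j) (hg0 j) (hg1 j)

end Substoch

lemma Elsinger.mul_diagonal {n : ℕ} {M : Matrix (Fin n) (Fin n) ℝ} (hE : Elsinger M)
    {g : Fin n → ℝ} (hg : ∀ j, g j = 0 ∨ g j = 1) : Elsinger (M * diagonal g) := by
  intro J hJ hsum
  refine hE J hJ fun j hj => ?_
  have hj := hsum j hj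
  simp only [Matrix.mul_diagonal, ← sum_mul] at hj
  rcases hg j with h | h
  · rw [h, mul_zero] at hj
    exact absurd hj zero_ne_one
  · rwa [h, mul_one] at hj

section Gmat

variable {n : ℕ}

lemma Gmat_congr {u v : Fin n → ℝ} (h : ∀ i, 0 ≤ u i ↔ 0 ≤ v i) : Gmat u = Gmat v := by
  simp only [Gmat, h]

lemma Gmat_mulVec_self (v : Fin n → ℝ) : Gmat v *ᵥ v = fun i => max (v i) 0 := by
  funext i
  rw [Gmat, mulVec_diagonal]
  split_ifs with h
  · rw [one_mul, max_eq_left h]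
  · rw [zero_mul, max_eq_right (le_of_not_ge h)]

lemma isUnit_det_one_sub_mul_Gmat {Ms : Matrix (Fin n) (Fin n) ℝ} (hMs : Substoch Ms)
    (hE : Elsinger Ms) (w : Fin n → ℝ) : IsUnit (1 - Ms * Gmat w).det := by
  refine (hMs.mul_diagonal (fun i => ?_) (fun i => ?_)).isUnit_det_one_sub
    (hE.mul_diagonal fun i => ?_) <;> split_ifs <;> norm_num

end Gmat

theorem equity_iteration_stabilizes_general {n : ℕ} (a d rbar : Fin n → ℝ)
    (Md Ms : Matrix (Fin n) (Fin n) ℝ)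
    (hMs : Substoch Ms) (hMsE : Elsinger Ms)
    (w : ℕ → Fin n → ℝ)
    (hw0 : w 0 = fun i => a i + Md.mulVec rbar i - d i)
    (hwk : ∀ k, w (k + 1) = (1 - Ms * Gmat (w k))⁻¹.mulVec (w 0))
    (l : ℕ)
    (hP : {i : Fin n | 0 ≤ w l i} = {i : Fin n | 0 ≤ w (l + 1) i}) :
    (∀ k, l + 1 ≤ k → w k = w (l + 1)) ∧
    ((fun i => max (a i + Md.mulVec rbar i
        + Ms.mulVec (fun j => max (w (l + 1) j) 0) i - d i) 0)
      = fun j => max (w (l + 1) j) 0) := by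
  have hG : Gmat (w (l + 1)) = Gmat (w l) := Gmat_congr fun i => (Set.ext_iff.1 hP i).symm
  have hfix : IsFixedPt (fun v => (1 - Ms * Gmat v)⁻¹ *ᵥ w 0) (w (l + 1)) := by
    rw [IsFixedPt, hG, hwk]
  refine ⟨eq_of_le_of_isFixedPt hwk hfix, ?_⟩
  have hlin : (1 - Ms * Gmat (w (l + 1))) *ᵥ w (l + 1) = w 0 := by
    rw [hG, hwk l, mulVec_mulVec, mul_nonsing_inv _ (isUnit_det_one_sub_mul_Gmat hMs hMsE _),
      one_mulVec]
  rw [sub_mulVec, one_mulVec, ← mulVec_mulVec, Gmat_mulVec_self, hw0] at hlin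
  funext i
  have hi := congrFun hlin i
  simp only [Pi.sub_apply] at hi
  rw [show a i + (Md *ᵥ rbar) i + (Ms *ᵥ fun j => max (w (l + 1) j) 0) i - d i = w (l + 1) i by
    linarith]

/-- If the sign-pattern sets `P(w^l)` and `P(w^{l+1})` coincide,
then the iteration is constant from step `l+1` on, and `(w^{l+1})⁺` is a fixed
point of the equity map `s ↦ (a + M^d r̄ + M^s s − d)⁺`. -/
theorem equity_iteration_stabilizes {n : ℕ} (a d rbar : Fin n → ℝ)
    (ha : ∀ i, 0 ≤ a i) (hd : ∀ i, 0 ≤ d i) (hrbar : ∀ i, 0 ≤ rbar i)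
    (Md Ms : Matrix (Fin n) (Fin n) ℝ)
    (hMdnn : ∀ i j, 0 ≤ Md i j)
    (hMs : Substoch Ms) (hMsE : Elsinger Ms)
    (w : ℕ → Fin n → ℝ)
    (hw0 : w 0 = fun i => a i + Md.mulVec rbar i - d i)
    (hwk : ∀ k, w (k + 1) = (1 - Ms * Gmat (w k))⁻¹.mulVec (w 0))
    (l : ℕ)
    (hP : {i : Fin n | 0 ≤ w l i} = {i : Fin n | 0 ≤ w (l + 1) i}) :
    (∀ k, l + 1 ≤ k → w k = w (l + 1)) ∧
    ((fun i => max (a i + Md.mulVec rbar i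
        + Ms.mulVec (fun j => max (w (l + 1) j) 0) i - d i) 0)
      = fun j => max (w (l + 1) j) 0) :=
  equity_iteration_stabilizes_general a d rbar Md Ms hMs hMsE w hw0 hwk l hP
end
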